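/- Let b be a natural number, let v : Fin (3b+1) → ℝ, and let H ⊆ Fin (3b+1) with |H| ≥ 2b+1. Sort the 3b+1 values of v in nondecreasing order and discard the smallest b values and the largest b values. Then every one of the remaining b+1 values lies in the closed interval [min_{i ∈ H} v i, max_{i ∈ H} v i]; that is, in the sorted list w(0) ≤ w(1) ≤ … ≤ w(3b), for every index k with b ≤ k ≤ 2b one has min_{i ∈ H} v i ≤ w(k) ≤ max_{i ∈ H} v i. -/

import Mathlib

/-!
If the `k`-th sorted value `w` lay below every honest value, all `≥ 2b+1` honest indices would
carry values strictly above `w`; but at most `3b - k ≤ 2b` values sit strictly above the `k`-th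
sorted one. Symmetrically, at most `k ≤ 2b` values sit strictly below it.
-/

open Finset

namespace Tuple

variable {n : ℕ} {α : Type*} [LinearOrder α]

theorem card_filter_lt_apply_sort_le (v : Fin n → α) (k : Fin n) :
    #{i | v i < v (sort v k)} ≤ k := by
  calc #{i | v i < v (sort v k)}
      ≤ #((Iio k).image (sort v)) := by
        refine card_le_card fun i hi => mem_image.mpr ⟨(sort v).symm i, ?_, by simp⟩
        have hlt : (v ∘ sort v) ((sort v).symm i) < (v ∘ sort v) k := by
          simpa using (mem_filter.mp hi).2
        exact mem_Iio.mpr ((monotone_sort v).reflect_lt hlt)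
    _ = k := by rw [card_image_of_injective _ (sort v).injective, Fin.card_Iio]

theorem card_filter_apply_sort_lt_add_lt (v : Fin n → α) (k : Fin n) :
    #{i | v (sort v k) < v i} + k < n := by
  have hcard : #{i | v (sort v k) < v i} ≤ n - 1 - k := by
    calc #{i | v (sort v k) < v i}
        ≤ #((Ioi k).image (sort v)) := by
          refine card_le_card fun i hi => mem_image.mpr ⟨(sort v).symm i, ?_, by simp⟩
          have hlt : (v ∘ sort v) k < (v ∘ sort v) ((sort v).symm i) := by
            simpa using (mem_filter.mp hi).2
          exact mem_Ioi.mpr ((monotone_sort v).reflect_lt hlt)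
      _ = n - 1 - k := by rw [card_image_of_injective _ (sort v).injective, Fin.card_Ioi]
  omega

end Tuple

namespace Finset

variable {ι α : Type*} [Fintype ι] [LinearOrder α]

theorem inf'_le_of_card_filter_lt_card (s : Finset ι) (hs : s.Nonempty) (v : ι → α) (c : α)
    (h : #{i | c < v i} < #s) : s.inf' hs v ≤ c := by
  obtain ⟨i, his, hi⟩ := exists_mem_notMem_of_card_lt_card h
  exact inf'_le_of_le v his (not_lt.mp fun hc => hi (mem_filter.mpr ⟨mem_univ i, hc⟩))

theorem le_sup'_of_card_filter_lt_card (s : Finset ι) (hs : s.Nonempty) (v : ι → α) (c : α)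
    (h : #{i | v i < c} < #s) : c ≤ s.sup' hs v :=
  inf'_le_of_card_filter_lt_card (α := αᵒᵈ) s hs v c h

end Finset

theorem sorted_middle_values_mem_Icc_honest (b : ℕ) (v : Fin (3 * b + 1) → ℝ)
    (H : Finset (Fin (3 * b + 1))) (hH : 2 * b + 1 ≤ H.card) :
    ∀ k : Fin (3 * b + 1), b ≤ k.val → k.val ≤ 2 * b →
      (v ∘ Tuple.sort v) k ∈
        Set.Icc (H.inf' (Finset.card_pos.mp (by omega)) v)
          (H.sup' (Finset.card_pos.mp (by omega)) v) := by
  intro k hbk hk2b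
  have above := Tuple.card_filter_apply_sort_lt_add_lt v k
  have below := Tuple.card_filter_lt_apply_sort_le v k
  exact ⟨H.inf'_le_of_card_filter_lt_card _ v (v (Tuple.sort v k)) (by omega),
    H.le_sup'_of_card_filter_lt_card _ v (v (Tuple.sort v k)) (by omega)⟩
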